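/- Let a : ℝⁿ → (n×n real matrices) be smooth with a(x) symmetric and invertible for every x, γⁱ_jk(x) = ½ Σ_l (a(x)⁻¹)^{il} ( ∂a_lj/∂xᵏ + ∂a_lk/∂xʲ − ∂a_jk/∂xˡ ) the Christoffel symbols, Gⁱ(x,y) = ½ Σ_{j,k} γⁱ_jk(x) yʲ yᵏ, and N^j_i = ∂Gʲ/∂yⁱ = Σ_k γʲ_ik yᵏ. Let φ : ℝⁿ → ℝ be smooth and set L(x,y) = Σ_{i,j} a_ij(x) yⁱ yʲ + Σ_j ∂φ/∂xʲ(x) yʲ. Then for every i and every (x,y), the horizontal derivative satisfies δL/δxⁱ(x,y) = ∂L/∂xⁱ(x,y) − Σ_j N^j_i(x,y) ∂L/∂yʲ(x,y) = Σ_j ( ∂²φ/∂xⁱ∂xʲ(x) − Σ_k γᵏ_ij(x) ∂φ/∂xᵏ(x) ) yʲ. -/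

import Mathlib

/-!
The Lagrangian is the Riemannian energy `L' = a_ij(x) yⁱyʲ` plus the complete lift
`φᶜ = ∂_jφ(x) yʲ`, and `δ/δxⁱ` is additive. The canonical connection `N^j_i = γʲ_ik yᵏ` is
metric: lowering its upper index with `a` (Christoffel symbols of the first kind) turns
`Σ_j N^j_i ∂L'/∂yʲ` into `Σ (∂_k a_mi + ∂_i a_mk − ∂_m a_ik) yᵏyᵐ`, where the first and last
terms cancel by symmetry of `a`, leaving `∂L'/∂xⁱ`. Hence `δL'/δxⁱ = 0`, and `δφᶜ/δxⁱ` is read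
off directly from `∂φᶜ/∂xⁱ = ∂_i∂_jφ yʲ` and `∂φᶜ/∂yʲ = ∂_jφ`.
-/

open scoped ContDiff

/-- The tangent bundle of `ℝⁿ`, identified with `ℝⁿ × ℝⁿ` (base coordinates `x`,
fibre coordinates `y`). -/
abbrev TM (n : ℕ) := (Fin n → ℝ) × (Fin n → ℝ)

/-- Partial derivative of `F` in the `i`-th base coordinate `xⁱ`. -/
noncomputable def pdx {n : ℕ} (F : TM n → ℝ) (i : Fin n) (p : TM n) : ℝ :=
  fderiv ℝ F p (Pi.single i 1, 0)

/-- Partial derivative of `F` in the `i`-th fibre coordinate `yⁱ`. -/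
noncomputable def pdy {n : ℕ} (F : TM n → ℝ) (i : Fin n) (p : TM n) : ℝ :=
  fderiv ℝ F p (0, Pi.single i 1)

/-- Partial derivative of a function on the base `ℝⁿ` in the `i`-th coordinate. -/
noncomputable def pdb {n : ℕ} (f : (Fin n → ℝ) → ℝ) (i : Fin n) (x : Fin n → ℝ) : ℝ :=
  fderiv ℝ f x (Pi.single i 1)

/-- Christoffel symbols `γⁱ_jk = ½ Σ_l (a⁻¹)^{il} (∂a_lj/∂xᵏ + ∂a_lk/∂xʲ − ∂a_jk/∂xˡ)`. -/
noncomputable def christoffel {n : ℕ} (a : (Fin n → ℝ) → Matrix (Fin n) (Fin n) ℝ)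
    (i j k : Fin n) (x : Fin n → ℝ) : ℝ :=
  (1 / 2) * ∑ l, (a x)⁻¹ i l *
    (pdb (fun z => a z l j) k x + pdb (fun z => a z l k) j x - pdb (fun z => a z j k) l x)

/-- Canonical semispray coefficients `Gⁱ(x,y) = ½ Σ_{j,k} γⁱ_jk(x) yʲ yᵏ` of the
Riemannian quadratic Lagrangian. -/
noncomputable def Gquad {n : ℕ} (a : (Fin n → ℝ) → Matrix (Fin n) (Fin n) ℝ)
    (i : Fin n) (p : TM n) : ℝ :=
  (1 / 2) * ∑ j, ∑ k, christoffel a i j k p.1 * p.2 j * p.2 k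

open Finset

section MatrixInverse

variable {E : Type*} [NormedAddCommGroup E] [NormedSpace ℝ E] {m : Type*} [Fintype m]
  [DecidableEq m] {b : E → Matrix m m ℝ}

theorem differentiable_matrix_det (hb : ∀ i j, Differentiable ℝ fun x => b x i j) :
    Differentiable ℝ fun x => (b x).det := by
  simp only [Matrix.det_apply]
  fun_prop

theorem differentiable_matrix_inv_apply (hb : ∀ i j, Differentiable ℝ fun x => b x i j)
    (hdet : ∀ x, (b x).det ≠ 0) (i j : m) : Differentiable ℝ fun x => (b x)⁻¹ i j := by
  have hadj : Differentiable ℝ fun x => (b x).adjugate i j := by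
    simp only [Matrix.adjugate_apply]
    refine differentiable_matrix_det fun k l => ?_
    by_cases h : k = j <;> simp [Matrix.updateRow_apply, h, hb k l]
  simp only [Matrix.inv_def, Ring.inverse_eq_inv', Matrix.smul_apply, smul_eq_mul]
  exact ((differentiable_matrix_det hb).inv hdet).mul hadj

end MatrixInverse

section

variable {n : ℕ}

theorem ContDiff.differentiable_pdb {f : (Fin n → ℝ) → ℝ} (hf : ContDiff ℝ 2 f) (i : Fin n) :
    Differentiable ℝ (pdb f i) :=
  ((hf.fderiv_right (m := 1) le_rfl).differentiable one_ne_zero).clm_apply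
    (differentiable_const _)

section FibrePolynomials

noncomputable def fibreLinear (d : Fin n → (Fin n → ℝ) → ℝ) (p : TM n) : ℝ :=
  ∑ j, d j p.1 * p.2 j

noncomputable def fibreQuadratic (c : Fin n → Fin n → (Fin n → ℝ) → ℝ) (p : TM n) : ℝ :=
  ∑ j, ∑ k, c j k p.1 * p.2 j * p.2 k

variable {d : Fin n → (Fin n → ℝ) → ℝ} {c : Fin n → Fin n → (Fin n → ℝ) → ℝ} {p : TM n}

theorem hasFDerivAt_fibreCoord (j : Fin n) (p : TM n) :
    HasFDerivAt (fun q : TM n => q.2 j)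
      ((ContinuousLinearMap.proj j).comp (ContinuousLinearMap.snd ℝ (Fin n → ℝ) (Fin n → ℝ))) p :=
  ((ContinuousLinearMap.proj j).comp
    (ContinuousLinearMap.snd ℝ (Fin n → ℝ) (Fin n → ℝ))).hasFDerivAt

theorem differentiableAt_fibreLinear (hd : ∀ j, DifferentiableAt ℝ (d j) p.1) :
    DifferentiableAt ℝ (fibreLinear d) p := by
  unfold fibreLinear
  fun_prop

theorem differentiableAt_fibreQuadratic (hc : ∀ j k, DifferentiableAt ℝ (c j k) p.1) :
    DifferentiableAt ℝ (fibreQuadratic c) p := by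
  unfold fibreQuadratic
  fun_prop

theorem fderiv_fibreLinear_apply (hd : ∀ j, DifferentiableAt ℝ (d j) p.1) (v : TM n) :
    fderiv ℝ (fibreLinear d) p v = ∑ j, (fderiv ℝ (d j) p.1 v.1 * p.2 j + d j p.1 * v.2 j) := by
  have hx : ∀ j, HasFDerivAt (fun q : TM n => d j q.1) _ p :=
    fun j => (hd j).hasFDerivAt.comp p hasFDerivAt_fst
  have hy := fun j => hasFDerivAt_fibreCoord (n := n) j p
  have H : HasFDerivAt (fibreLinear d) _ p :=
    HasFDerivAt.fun_sum fun j _ => (hx j).fun_mul (hy j)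
  rw [H.fderiv]
  simp only [_root_.sum_apply, add_apply, smul_apply, ContinuousLinearMap.comp_apply,
    ContinuousLinearMap.coe_fst', ContinuousLinearMap.coe_snd', ContinuousLinearMap.proj_apply,
    smul_eq_mul]
  exact sum_congr rfl fun j _ => by ring

theorem fderiv_fibreQuadratic_apply (hc : ∀ j k, DifferentiableAt ℝ (c j k) p.1) (v : TM n) :
    fderiv ℝ (fibreQuadratic c) p v = ∑ j, ∑ k, (fderiv ℝ (c j k) p.1 v.1 * p.2 j * p.2 k
      + c j k p.1 * v.2 j * p.2 k + c j k p.1 * p.2 j * v.2 k) := by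
  have hx : ∀ j k, HasFDerivAt (fun q : TM n => c j k q.1) _ p :=
    fun j k => (hc j k).hasFDerivAt.comp p hasFDerivAt_fst
  have hy := fun j => hasFDerivAt_fibreCoord (n := n) j p
  have H : HasFDerivAt (fibreQuadratic c) _ p :=
    HasFDerivAt.fun_sum fun j _ => HasFDerivAt.fun_sum fun k _ =>
      ((hx j k).fun_mul (hy j)).fun_mul (hy k)
  rw [H.fderiv]
  simp only [_root_.sum_apply, add_apply, smul_add, smul_apply, ContinuousLinearMap.comp_apply,
    ContinuousLinearMap.coe_fst', ContinuousLinearMap.coe_snd', ContinuousLinearMap.proj_apply,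
    smul_eq_mul]
  exact sum_congr rfl fun j _ => sum_congr rfl fun k _ => by ring

theorem pdx_fibreLinear (hd : ∀ j, DifferentiableAt ℝ (d j) p.1) (i : Fin n) :
    pdx (fibreLinear d) i p = ∑ j, pdb (d j) i p.1 * p.2 j := by
  simp [pdx, pdb, fderiv_fibreLinear_apply hd]

theorem pdy_fibreLinear (hd : ∀ j, DifferentiableAt ℝ (d j) p.1) (i : Fin n) :
    pdy (fibreLinear d) i p = d i p.1 := by
  simp [pdy, fderiv_fibreLinear_apply hd, Pi.single_apply]

theorem pdx_fibreQuadratic (hc : ∀ j k, DifferentiableAt ℝ (c j k) p.1) (i : Fin n) :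
    pdx (fibreQuadratic c) i p = ∑ j, ∑ k, pdb (c j k) i p.1 * p.2 j * p.2 k := by
  simp [pdx, pdb, fderiv_fibreQuadratic_apply hc]

theorem pdy_fibreQuadratic (hc : ∀ j k, DifferentiableAt ℝ (c j k) p.1) (i : Fin n) :
    pdy (fibreQuadratic c) i p = ∑ k, (c i k p.1 + c k i p.1) * p.2 k := by
  simp [pdy, fderiv_fibreQuadratic_apply hc, Pi.single_apply, sum_add_distrib, add_mul]

end FibrePolynomials

section HorizontalDeriv

variable {p : TM n}

noncomputable def horizontalDeriv (N : Fin n → Fin n → TM n → ℝ) (F : TM n → ℝ) (i : Fin n)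
    (p : TM n) : ℝ :=
  pdx F i p - ∑ j, N j i p * pdy F j p

theorem horizontalDeriv_add {N : Fin n → Fin n → TM n → ℝ} {F G : TM n → ℝ}
    (hF : DifferentiableAt ℝ F p) (hG : DifferentiableAt ℝ G p) (i : Fin n) :
    horizontalDeriv N (F + G) i p = horizontalDeriv N F i p + horizontalDeriv N G i p := by
  simp only [horizontalDeriv, pdx, pdy, fderiv_add hF hG, add_apply, mul_add, sum_add_distrib]
  ring

end HorizontalDeriv

section Riemannian

variable {a : (Fin n → ℝ) → Matrix (Fin n) (Fin n) ℝ}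

noncomputable def canonicalConnection (a : (Fin n → ℝ) → Matrix (Fin n) (Fin n) ℝ) (j i : Fin n)
    (p : TM n) : ℝ :=
  pdy (Gquad a j) i p

theorem christoffel_comm (hsymm : ∀ x, (a x).IsSymm) (i j k : Fin n) (x : Fin n → ℝ) :
    christoffel a i j k x = christoffel a i k j x := by
  have hjk : (fun z => a z j k) = fun z => a z k j := funext fun z => (hsymm z).apply k j
  simp only [christoffel, hjk]
  exact congrArg _ (sum_congr rfl fun l _ => by ring)

open Matrix in
theorem sum_mul_christoffel {x : Fin n → ℝ} (hx : IsUnit (a x)) (m i k : Fin n) :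
    ∑ j, a x m j * christoffel a j i k x = 1 / 2 * (pdb (fun z => a z m i) k x
      + pdb (fun z => a z m k) i x - pdb (fun z => a z i k) m x) := by
  set T : Fin n → ℝ := fun l => 1 / 2 * (pdb (fun z => a z l i) k x
      + pdb (fun z => a z l k) i x - pdb (fun z => a z i k) l x)
  have hγ : (fun j => christoffel a j i k x) = (a x)⁻¹ *ᵥ T := by
    ext j
    simp only [christoffel, T, Matrix.mulVec, dotProduct, mul_sum]
    exact sum_congr rfl fun l _ => by ring
  have hdet : IsUnit (a x).det := (Matrix.isUnit_iff_isUnit_det _).mp hx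
  calc ∑ j, a x m j * christoffel a j i k x = (a x *ᵥ (a x)⁻¹ *ᵥ T) m := by
        rw [← hγ]; rfl
    _ = T m := by rw [Matrix.mulVec_mulVec, Matrix.mul_nonsing_inv _ hdet, Matrix.one_mulVec]

theorem differentiable_christoffel (ha : ∀ i j, ContDiff ℝ 2 fun x => a x i j)
    (hinv : ∀ x, IsUnit (a x)) (i j k : Fin n) : Differentiable ℝ (christoffel a i j k) := by
  have hpdb : ∀ u v w, Differentiable ℝ (pdb (fun z => a z u v) w) :=
    fun u v w => (ha u v).differentiable_pdb w
  have hinv' := differentiable_matrix_inv_apply (fun i j => (ha i j).differentiable two_ne_zero)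
    fun x => ((Matrix.isUnit_iff_isUnit_det _).mp (hinv x)).ne_zero
  exact (Differentiable.fun_sum fun l _ =>
    (hinv' i l).mul (((hpdb l j k).add (hpdb l k j)).sub (hpdb j k l))).const_mul _

theorem Gquad_eq_fibreQuadratic (i : Fin n) :
    Gquad a i = fibreQuadratic fun j k x => 1 / 2 * christoffel a i j k x := by
  ext p
  simp only [Gquad, fibreQuadratic, mul_sum, mul_assoc]

theorem canonicalConnection_eq (ha : ∀ i j, ContDiff ℝ 2 fun x => a x i j)
    (hsymm : ∀ x, (a x).IsSymm) (hinv : ∀ x, IsUnit (a x)) (j i : Fin n) (p : TM n) :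
    canonicalConnection a j i p = ∑ k, christoffel a j i k p.1 * p.2 k := by
  rw [canonicalConnection, Gquad_eq_fibreQuadratic, pdy_fibreQuadratic
    fun _ _ => ((differentiable_christoffel ha hinv _ _ _).const_mul _) _]
  refine sum_congr rfl fun k _ => ?_
  rw [christoffel_comm hsymm j k i]
  ring

theorem horizontalDeriv_fibreQuadratic_metric_eq_zero
    (ha : ∀ i j, ContDiff ℝ 2 fun x => a x i j) (hsymm : ∀ x, (a x).IsSymm)
    (hinv : ∀ x, IsUnit (a x)) (i : Fin n) (p : TM n) :
    horizontalDeriv (canonicalConnection a) (fibreQuadratic fun j k x => a x j k) i p = 0 := by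
  obtain ⟨x, y⟩ := p
  have hda : ∀ j k, DifferentiableAt ℝ (fun z => a z j k) x :=
    fun j k => ((ha j k).differentiable two_ne_zero).differentiableAt
  have hsa : ∀ j k, (fun z => a z j k) = fun z => a z k j :=
    fun j k => funext fun z => (hsymm z).apply k j
  have hN : ∑ j, canonicalConnection a j i (x, y)
        * pdy (fibreQuadratic fun j k x => a x j k) j (x, y)
      = ∑ k, ∑ m, (pdb (fun z => a z m i) k x + pdb (fun z => a z m k) i x
          - pdb (fun z => a z i k) m x) * (y k * y m) := by
    calc _ = ∑ j, ∑ k, ∑ m, christoffel a j i k x * y k * ((a x j m + a x m j) * y m) := by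
          simp only [canonicalConnection_eq ha hsymm hinv, pdy_fibreQuadratic (p := (x, y)) hda,
            sum_mul_sum]
      _ = ∑ k, ∑ m, ∑ j, a x m j * christoffel a j i k x * (2 * (y k * y m)) := by
          rw [sum_comm]
          refine sum_congr rfl fun k _ => ?_
          rw [sum_comm]
          refine sum_congr rfl fun m _ => sum_congr rfl fun j _ => ?_
          rw [(hsymm x).apply m j]
          ring
      _ = _ := by
          refine sum_congr rfl fun k _ => sum_congr rfl fun m _ => ?_
          rw [← sum_mul, sum_mul_christoffel (hinv x)]
          ring
  have hcomm : ∑ k, ∑ m, pdb (fun z => a z m k) i x * (y k * y m)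
      = ∑ j, ∑ k, pdb (fun z => a z j k) i x * y j * y k := by
    rw [sum_comm]
    exact sum_congr rfl fun j _ => sum_congr rfl fun k _ => by ring
  have hswap : ∑ k, ∑ m, pdb (fun z => a z m i) k x * (y k * y m)
      = ∑ k, ∑ m, pdb (fun z => a z i k) m x * (y k * y m) := by
    rw [sum_comm]
    exact sum_congr rfl fun k _ => sum_congr rfl fun m _ => by rw [hsa k i]; ring
  rw [horizontalDeriv, hN, pdx_fibreQuadratic hda]
  simp only [sub_mul, add_mul, sum_add_distrib, sum_sub_distrib, hswap, hcomm]
  ring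

theorem horizontalDeriv_fibreLinear_pdb {φ : (Fin n → ℝ) → ℝ} (hφ : ContDiff ℝ 2 φ)
    (ha : ∀ i j, ContDiff ℝ 2 fun x => a x i j) (hsymm : ∀ x, (a x).IsSymm)
    (hinv : ∀ x, IsUnit (a x)) (i : Fin n) (p : TM n) :
    horizontalDeriv (canonicalConnection a) (fibreLinear fun j => pdb φ j) i p
      = ∑ j, (pdb (pdb φ j) i p.1 - ∑ k, christoffel a k i j p.1 * pdb φ k p.1) * p.2 j := by
  have hdφ : ∀ j, DifferentiableAt ℝ (pdb φ j) p.1 :=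
    fun j => (hφ.differentiable_pdb j).differentiableAt
  simp only [horizontalDeriv, pdx_fibreLinear hdφ, pdy_fibreLinear hdφ,
    canonicalConnection_eq ha hsymm hinv, sum_mul, sub_mul, sum_sub_distrib]
  rw [sum_comm]
  exact congrArg _ (sum_congr rfl fun j _ => sum_congr rfl fun k _ => by ring)

end Riemannian

end

/-- for `L(x,y) = Σ a_ij(x) yⁱyʲ + Σ ∂φ/∂xʲ(x) yʲ`, with the canonical
nonlinear connection `N^j_i = ∂Gʲ/∂yⁱ` of the Riemannian part, the horizontal
derivative is `δL/δxⁱ = Σ_j (∂²φ/∂xⁱ∂xʲ − Σ_k γᵏ_ij ∂φ/∂xᵏ) yʲ`. -/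
theorem horizontal_deriv_of_riemannian_plus_lift (n : ℕ)
    (a : (Fin n → ℝ) → Matrix (Fin n) (Fin n) ℝ)
    (ha : ∀ i j : Fin n, ContDiff ℝ ∞ (fun x => a x i j))
    (hsymm : ∀ x : Fin n → ℝ, (a x).IsSymm) (hinv : ∀ x : Fin n → ℝ, IsUnit (a x))
    (φ : (Fin n → ℝ) → ℝ) (hφ : ContDiff ℝ ∞ φ)
    (L : TM n → ℝ)
    (hLdef : ∀ p : TM n,
      L p = (∑ i, ∑ j, a p.1 i j * p.2 i * p.2 j) + ∑ j, pdb φ j p.1 * p.2 j) :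
    ∀ (p : TM n) (i : Fin n),
      pdx L i p - ∑ j, pdy (fun q => Gquad a j q) i p * pdy L j p
        = ∑ j, (pdb (pdb φ j) i p.1 - ∑ k, christoffel a k i j p.1 * pdb φ k p.1)
            * p.2 j := by
  intro p i
  have h2 : (2 : WithTop ℕ∞) ≤ ∞ := by norm_cast
  have ha₂ : ∀ i j, ContDiff ℝ 2 fun x => a x i j := fun i j => (ha i j).of_le h2
  have hφ₂ : ContDiff ℝ 2 φ := hφ.of_le h2
  have hL : L = (fibreQuadratic fun j k x => a x j k) + fibreLinear fun j => pdb φ j :=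
    funext hLdef
  change horizontalDeriv (canonicalConnection a) L i p = _
  rw [hL, horizontalDeriv_add, horizontalDeriv_fibreQuadratic_metric_eq_zero ha₂ hsymm hinv,
    zero_add, horizontalDeriv_fibreLinear_pdb hφ₂ ha₂ hsymm hinv]
  · exact differentiableAt_fibreQuadratic fun j k =>
      ((ha₂ j k).differentiable two_ne_zero).differentiableAt
  · exact differentiableAt_fibreLinear fun j => (hφ₂.differentiable_pdb j).differentiableAt
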